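/- Let an incomplete weighted profile over candidates {A,B,C} have odd total weight W, and for candidates x,y let D(y,x) denote the total weight of voters whose partial order ranks y above x. Consider the cup rule with agenda ((A vs B), then C). Then A is a possible winner (i.e., A is the cup winner in some completion of the profile) if and only if D(B,A) < W/2 and D(C,A) < W/2; likewise, B is a possible winner if and only if D(A,B) < W/2 and D(C,B) < W/2. -/

import Mathlib

/-!
A completion can only add weight to a pairwise comparison, so `D(x, a) < W / 2` is necessary for
`a` to beat `x` in some completion. Conversely, each voter's partial order extends to a linear
order that puts `a` above every candidate not already forced above it; in the resulting completion
`N(x, a) = D(x, a)` for every `x`, so `a` beats every opponent it can beat at all. Both `A` and `B`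
win the cup exactly when they beat the two other candidates (for `B` because an odd total weight
rules out ties).
-/

namespace Stmt11

attribute [local instance] Classical.propDecidable

inductive Cand where
  | A | B | C
deriving DecidableEq

open Cand

/-- Total weight of voters ranking `x` above `y` in (possibly partial)
profile `R`. -/
noncomputable def wAbove {V : Type*} [Fintype V]
    (w : V → ℕ) (R : V → Cand → Cand → Prop) (x y : Cand) : ℕ :=
  ∑ v, if R v x y then w v else 0

/-- Winner of the cup with agenda ((A vs B), then C) for a complete profile. -/
noncomputable def cupWinner {V : Type*} [Fintype V]
    (w : V → ℕ) (R : V → Cand → Cand → Prop) : Cand :=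
  let w1 := if wAbove w R A B > wAbove w R B A then A else B
  if wAbove w R w1 C > wAbove w R C w1 then w1 else C

section StrictOrderExtension

variable {α : Type*}

theorem exists_strictTotalOrder_extension (q : α → α → Prop) [IsStrictOrder α q] :
    ∃ r, IsStrictTotalOrder α r ∧ ∀ x y, q x y → r x y := by
  let := partialOrderOfSO q
  obtain ⟨s, hs, hqs⟩ := extend_partialOrder (α := α) (· ≤ ·)
  refine ⟨fun x y => s x y ∧ x ≠ y, ?_, fun x y h => ⟨hqs x y (Or.inr h), ne_of_irrefl h⟩⟩
  refine { trichotomous := fun x y hxy hyx => ?_, irrefl := fun x h => h.2 rfl,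
           trans := fun x y z hxy hyz => ⟨_root_.trans hxy.1 hyz.1, ?_⟩ }
  · by_contra hne
    rcases total_of s x y with h | h
    exacts [hxy ⟨h, hne⟩, hyx ⟨h, Ne.symm hne⟩]
  · rintro rfl
    exact hyz.2 (antisymm hyz.1 hxy.1)

/-- `q` with `a`, and everything `q` ranks above `a`, moved above all other elements. -/
def promote (q : α → α → Prop) (a x y : α) : Prop :=
  q x y ∨ ((x = a ∨ q x a) ∧ ¬(y = a ∨ q y a))

instance {q : α → α → Prop} [IsStrictOrder α q] {a : α} : IsStrictOrder α (promote q a) where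
  irrefl x h := h.elim (irrefl x) fun h => h.2 h.1
  trans x y z := by
    rintro (hxy | ⟨hx, hy⟩) (hyz | ⟨hy', hz⟩)
    · exact Or.inl (_root_.trans hxy hyz)
    · refine Or.inr ⟨?_, hz⟩
      rcases hy' with rfl | hya
      exacts [Or.inr hxy, Or.inr (_root_.trans hxy hya)]
    · refine Or.inr ⟨hx, fun hz => hy ?_⟩
      rcases hz with rfl | hza
      exacts [Or.inr hyz, Or.inr (_root_.trans hyz hza)]
    · exact absurd hy' hy

theorem exists_strictTotalOrder_extension_promote (q : α → α → Prop) [IsStrictOrder α q]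
    (a : α) : ∃ r, IsStrictTotalOrder α r ∧ (∀ x y, q x y → r x y) ∧ ∀ x, r x a ↔ q x a := by
  obtain ⟨r, hr, hpr⟩ := exists_strictTotalOrder_extension (promote q a)
  refine ⟨r, hr, fun x y h => hpr x y (Or.inl h),
    fun x => ⟨fun hxa => ?_, fun h => hpr x a (Or.inl h)⟩⟩
  by_contra hqxa
  have hax : r a x := hpr a x (Or.inr ⟨Or.inl rfl, ?_⟩)
  · exact asymm hxa hax
  · rintro (rfl | h)
    exacts [irrefl _ hxa, hqxa h]

end StrictOrderExtension

theorem cast_lt_cast_div_two_iff (m n : ℕ) : (m : ℚ) < (n : ℚ) / 2 ↔ 2 * m < n := by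
  rw [lt_div_iff₀ two_pos, mul_comm]
  exact_mod_cast Iff.rfl

section Profile

variable {V : Type*} [Fintype V] (w : V → ℕ)

theorem wAbove_mono {P R : V → Cand → Cand → Prop} {x y : Cand}
    (h : ∀ v, P v x y → R v x y) : wAbove w P x y ≤ wAbove w R x y :=
  Finset.sum_le_sum fun v _ => by
    by_cases hv : P v x y <;> simp [hv, h v]

theorem wAbove_congr {P R : V → Cand → Cand → Prop} {x y : Cand}
    (h : ∀ v, P v x y ↔ R v x y) : wAbove w P x y = wAbove w R x y := by
  simp only [wAbove, h]

theorem wAbove_add_wAbove {R : V → Cand → Cand → Prop}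
    (hR : ∀ v, IsStrictTotalOrder Cand (R v)) {x y : Cand} (hxy : x ≠ y) :
    wAbove w R x y + wAbove w R y x = ∑ v, w v := by
  rw [wAbove, wAbove, ← Finset.sum_add_distrib]
  refine Finset.sum_congr rfl fun v _ => ?_
  rcases trichotomous_of (R v) x y with h | rfl | h
  · simp [h, asymm h]
  · exact absurd rfl hxy
  · simp [h, asymm h]

theorem wAbove_lt_wAbove_iff {R : V → Cand → Cand → Prop}
    (hR : ∀ v, IsStrictTotalOrder Cand (R v)) {x y : Cand} (hxy : x ≠ y) :
    wAbove w R y x < wAbove w R x y ↔ 2 * wAbove w R y x < ∑ v, w v := by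
  have := wAbove_add_wAbove w hR hxy
  omega

theorem cupWinner_eq_A_iff (R : V → Cand → Cand → Prop) :
    cupWinner w R = A ↔
      wAbove w R B A < wAbove w R A B ∧ wAbove w R C A < wAbove w R A C := by
  simp only [cupWinner, gt_iff_lt]
  split_ifs <;> simp_all

theorem cupWinner_eq_B_iff {R : V → Cand → Cand → Prop}
    (hR : ∀ v, IsStrictTotalOrder Cand (R v)) (hodd : Odd (∑ v, w v)) :
    cupWinner w R = B ↔
      wAbove w R A B < wAbove w R B A ∧ wAbove w R C B < wAbove w R B C := by
  have hno_tie : wAbove w R A B ≠ wAbove w R B A := by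
    intro h
    have hsum := wAbove_add_wAbove w hR (x := A) (y := B) (by decide)
    rw [h] at hsum
    exact Nat.not_even_iff_odd.2 hodd ⟨_, hsum.symm⟩
  simp only [cupWinner, gt_iff_lt]
  split_ifs <;> simp_all <;> omega

variable {Q : V → Cand → Cand → Prop}

theorem exists_completion_wAbove_eq (hQ : ∀ v, IsStrictOrder Cand (Q v)) (a : Cand) :
    ∃ R : V → Cand → Cand → Prop, (∀ v, IsStrictTotalOrder Cand (R v)) ∧
      (∀ v s t, Q v s t → R v s t) ∧ ∀ x, wAbove w R x a = wAbove w Q x a := by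
  choose R hR hQR hRa using fun v => exists_strictTotalOrder_extension_promote (Q v) a
  exact ⟨R, hR, hQR, fun x => wAbove_congr w fun v => hRa v x⟩

theorem exists_completion_beats_iff (hQ : ∀ v, IsStrictOrder Cand (Q v)) {a x y : Cand}
    (hx : a ≠ x) (hy : a ≠ y) :
    (∃ R : V → Cand → Cand → Prop, (∀ v, IsStrictTotalOrder Cand (R v)) ∧
        (∀ v s t, Q v s t → R v s t) ∧
        (wAbove w R x a < wAbove w R a x ∧ wAbove w R y a < wAbove w R a y)) ↔
      2 * wAbove w Q x a < ∑ v, w v ∧ 2 * wAbove w Q y a < ∑ v, w v := by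
  constructor
  · rintro ⟨R, hR, hQR, hxa, hya⟩
    rw [wAbove_lt_wAbove_iff w hR hx] at hxa
    rw [wAbove_lt_wAbove_iff w hR hy] at hya
    have := wAbove_mono w fun v => hQR v x a
    have := wAbove_mono w fun v => hQR v y a
    omega
  · rintro ⟨hxa, hya⟩
    obtain ⟨R, hR, hQR, hRa⟩ := exists_completion_wAbove_eq w hQ a
    refine ⟨R, hR, hQR, ?_, ?_⟩
    · rwa [wAbove_lt_wAbove_iff w hR hx, hRa]
    · rwa [wAbove_lt_wAbove_iff w hR hy, hRa]

end Profile

theorem possible_cup_winners_iff_general {V : Type*} [Fintype V]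
    (w : V → ℕ)
    (hodd : Odd (∑ v, w v))
    (Q : V → Cand → Cand → Prop) (hQ : ∀ v, IsStrictOrder Cand (Q v)) :
    ((∃ R : V → Cand → Cand → Prop,
        (∀ v, IsStrictTotalOrder Cand (R v)) ∧
        (∀ v a b, Q v a b → R v a b) ∧
        cupWinner w R = A)
      ↔ ((wAbove w Q B A : ℚ) < (∑ v, w v : ℕ) / 2 ∧
         (wAbove w Q C A : ℚ) < (∑ v, w v : ℕ) / 2))
    ∧
    ((∃ R : V → Cand → Cand → Prop,
        (∀ v, IsStrictTotalOrder Cand (R v)) ∧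
        (∀ v a b, Q v a b → R v a b) ∧
        cupWinner w R = B)
      ↔ ((wAbove w Q A B : ℚ) < (∑ v, w v : ℕ) / 2 ∧
         (wAbove w Q C B : ℚ) < (∑ v, w v : ℕ) / 2)) := by
  simp only [cast_lt_cast_div_two_iff]
  constructor
  · simp only [cupWinner_eq_A_iff]
    exact exists_completion_beats_iff w hQ (by decide) (by decide)
  · rw [← exists_completion_beats_iff w hQ (a := B) (by decide) (by decide)]
    exact exists_congr fun R => and_congr_right fun hR => and_congr_right fun _ =>
      cupWinner_eq_B_iff w hR hodd

theorem possible_cup_winners_iff {V : Type*} [Fintype V]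
    (w : V → ℕ) (hw : ∀ v, 0 < w v)
    (hodd : Odd (∑ v, w v))
    (Q : V → Cand → Cand → Prop) (hQ : ∀ v, IsStrictOrder Cand (Q v)) :
    ((∃ R : V → Cand → Cand → Prop,
        (∀ v, IsStrictTotalOrder Cand (R v)) ∧
        (∀ v a b, Q v a b → R v a b) ∧
        cupWinner w R = A)
      ↔ ((wAbove w Q B A : ℚ) < (∑ v, w v : ℕ) / 2 ∧
         (wAbove w Q C A : ℚ) < (∑ v, w v : ℕ) / 2))
    ∧
    ((∃ R : V → Cand → Cand → Prop,
        (∀ v, IsStrictTotalOrder Cand (R v)) ∧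
        (∀ v a b, Q v a b → R v a b) ∧
        cupWinner w R = B)
      ↔ ((wAbove w Q A B : ℚ) < (∑ v, w v : ℕ) / 2 ∧
         (wAbove w Q C B : ℚ) < (∑ v, w v : ℕ) / 2)) :=
  possible_cup_winners_iff_general w hodd Q hQ

end Stmt11
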